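/- arXiv:2411.09188 — 4 statements merged into one kernel-verified Lean document; each statement's English description precedes it below -/
import Mathlib

section
/- Let K be a field of characteristic zero and let C be a K-linear preadditive category. Let o ≥ 1 be an integer and let A, A', A'' be objects of C equipped with automorphisms g : A → A, g' : A' → A', g'' : A'' → A'' satisfying g^o = id_A, (g')^o = id_{A'}, (g'')^o = id_{A''}. Suppose i' : A' → A and p'' : A → A'' are morphisms satisfying the equivariance conditions g ∘ i' = i' ∘ g' and g'' ∘ p'' = p'' ∘ g, and suppose there exist morphisms p' : A → A' and i'' : A'' → A in C (not assumed equivariant) such that p' ∘ i' = id_{A'}, p' ∘ i'' = 0, p'' ∘ i' = 0, p'' ∘ i'' = id_{A''}, and i' ∘ p' + i'' ∘ p'' = id_A. Then there exist morphisms p̃' : A → A' and ĩ'' : A'' → A satisfying the equivariance conditions g' ∘ p̃' = p̃' ∘ g and g ∘ ĩ'' = ĩ'' ∘ g'', and such that p̃' ∘ i' = id_{A'}, p̃' ∘ ĩ'' = 0, p'' ∘ i' = 0, p'' ∘ ĩ'' = id_{A''}, and i' ∘ p̃' + ĩ'' ∘ p'' = id_A. -/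
/-!
Averaging the retraction `p'` over the cyclic group generated by `g` and `g'` (possible because
`o` is invertible in `K`) gives an equivariant retraction `p̃` of `i'`. Once `p̃` is fixed, the
section `ĩ'' := i'' ≫ (𝟙 - p̃ ≫ i')` is forced, and it is equivariant because the idempotent
`𝟙 - p̃ ≫ i'` is and `p''` is a split epimorphism.
-/

open CategoryTheory

/-- Iterated composition power of an endomorphism in a category. -/
def compPow {C : Type*} [CategoryTheory.Category C] {A : C} (g : A ⟶ A) : ℕ → (A ⟶ A)
  | 0 => 𝟙 A
  | n + 1 => compPow g n ≫ g

section CompPow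

variable {C : Type*} [Category C]

lemma compPow_add {A : C} (g : A ⟶ A) (m n : ℕ) :
    compPow g (m + n) = compPow g m ≫ compPow g n := by
  induction n with
  | zero => simp [compPow]
  | succ n ih => rw [← Nat.add_assoc, compPow, compPow, ih, Category.assoc]

lemma comp_compPow_of_comp_eq {X Y : C} {gX : X ⟶ X} {gY : Y ⟶ Y} {f : X ⟶ Y}
    (h : f ≫ gY = gX ≫ f) (n : ℕ) : f ≫ compPow gY n = compPow gX n ≫ f := by
  induction n with
  | zero => simp [compPow]
  | succ n ih => rw [compPow, compPow, ← Category.assoc, ih, Category.assoc, h, Category.assoc]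

lemma compPow_comp_compPow_sub {A : C} {g : A ⟶ A} {o : ℕ} (hg : compPow g o = 𝟙 A) {k : ℕ}
    (hk : k ≤ o) : compPow g k ≫ compPow g (o - k) = 𝟙 A := by
  rw [← compPow_add, Nat.add_sub_cancel' hk, hg]

end CompPow

section CyclicAverage

variable (K : Type*) {C : Type*} [Category C] [Preadditive C] [DivisionRing K] [Linear K C]

/-- `(1/o) ∑_{k < o} gX^k ≫ f ≫ gY^{-k}`, where `gY^{o-k}` stands for `gY^{-k}` when `gY^o = 𝟙`. -/
def cyclicAverage {X Y : C} (gX : X ⟶ X) (gY : Y ⟶ Y) (o : ℕ) (f : X ⟶ Y) : X ⟶ Y :=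
  (o : K)⁻¹ • ∑ k ∈ Finset.range o, compPow gX k ≫ f ≫ compPow gY (o - k)

variable {K}

lemma cyclicAverage_comp {X Y : C} {gX : X ⟶ X} {gY : Y ⟶ Y} {o : ℕ}
    (hX : compPow gX o = 𝟙 X) (hY : compPow gY o = 𝟙 Y) (f : X ⟶ Y) :
    cyclicAverage K gX gY o f ≫ gY = gX ≫ cyclicAverage K gX gY o f := by
  let F : ℕ → (X ⟶ Y) := fun j => compPow gX j ≫ f ≫ compPow gY (o + 1 - j)
  have hright : (∑ k ∈ Finset.range o, compPow gX k ≫ f ≫ compPow gY (o - k)) ≫ gY =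
      ∑ k ∈ Finset.range o, F k := by
    rw [Preadditive.sum_comp]
    refine Finset.sum_congr rfl fun k hk => ?_
    simp only [F]
    rw [show o + 1 - k = o - k + 1 by have := Finset.mem_range.mp hk; omega]
    simp only [compPow, Category.assoc]
  have hleft : gX ≫ (∑ k ∈ Finset.range o, compPow gX k ≫ f ≫ compPow gY (o - k)) =
      ∑ k ∈ Finset.range o, F (k + 1) := by
    rw [Preadditive.comp_sum]
    refine Finset.sum_congr rfl fun k _ => ?_
    rw [← Category.assoc, comp_compPow_of_comp_eq rfl k]
    simp only [F, compPow, Nat.add_sub_add_right]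
  have hends : F o = F 0 := by
    simp only [F, hX, compPow, Nat.add_sub_cancel_left, Nat.sub_zero, hY, Category.id_comp]
  have hshift := (Finset.sum_range_succ' F o).symm.trans (Finset.sum_range_succ F o)
  rw [hends] at hshift
  rw [cyclicAverage, Linear.smul_comp, Linear.comp_smul, hright, hleft, add_right_cancel hshift]

lemma comp_cyclicAverage {W X Y : C} {gW : W ⟶ W} {gX : X ⟶ X} (gY : Y ⟶ Y) (o : ℕ)
    {u : W ⟶ X} (hu : u ≫ gX = gW ≫ u) (f : X ⟶ Y) :
    u ≫ cyclicAverage K gX gY o f = cyclicAverage K gW gY o (u ≫ f) := by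
  simp only [cyclicAverage, Linear.comp_smul, Preadditive.comp_sum, ← Category.assoc,
    comp_compPow_of_comp_eq hu]

lemma cyclicAverage_of_comp_eq {X Y : C} {gX : X ⟶ X} {gY : Y ⟶ Y} {o : ℕ} (ho : (o : K) ≠ 0)
    (hY : compPow gY o = 𝟙 Y) {f : X ⟶ Y} (hf : f ≫ gY = gX ≫ f) :
    cyclicAverage K gX gY o f = f := by
  have hterm : ∀ k ∈ Finset.range o, compPow gX k ≫ f ≫ compPow gY (o - k) = f := fun k hk => by
    rw [← Category.assoc, ← comp_compPow_of_comp_eq hf, Category.assoc,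
      compPow_comp_compPow_sub hY (Finset.mem_range.mp hk).le, Category.comp_id]
  rw [cyclicAverage, Finset.sum_congr rfl hterm, Finset.sum_const, Finset.card_range,
    ← Nat.cast_smul_eq_nsmul K, inv_smul_smul₀ ho]

end CyclicAverage

section EquivariantComplement

variable {C : Type*} [Category C] [Preadditive C] {A A' A'' : C}
  {g : A ⟶ A} {g' : A' ⟶ A'} {g'' : A'' ⟶ A''}
  {i' : A' ⟶ A} {p'' : A ⟶ A''} {p p' : A ⟶ A'} {i'' : A'' ⟶ A}

lemma comp_comp_id_sub_comp (hi'p : i' ≫ p = 𝟙 A') (h5 : p' ≫ i' + p'' ≫ i'' = 𝟙 A) :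
    p'' ≫ i'' ≫ (𝟙 A - p ≫ i') = 𝟙 A - p ≫ i' := by
  have hp'' : p'' ≫ i'' = 𝟙 A - p' ≫ i' := eq_sub_of_add_eq' h5
  rw [← Category.assoc, hp'', Preadditive.sub_comp, Category.id_comp, Preadditive.comp_sub,
    Category.comp_id, Category.assoc, ← Category.assoc i', hi'p, Category.id_comp, sub_self,
    sub_zero]

lemma exists_equivariant_complement (hi' : i' ≫ g = g' ≫ i') (hp'' : p'' ≫ g'' = g ≫ p'')
    (hp : p ≫ g' = g ≫ p) (hi'p : i' ≫ p = 𝟙 A') (h3 : i' ≫ p'' = 0) (h4 : i'' ≫ p'' = 𝟙 A'')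
    (h5 : p' ≫ i' + p'' ≫ i'' = 𝟙 A) :
    ∃ i : A'' ⟶ A, i ≫ g = g'' ≫ i ∧ i ≫ p = 0 ∧ i ≫ p'' = 𝟙 A'' ∧ p ≫ i' + p'' ≫ i = 𝟙 A := by
  have he : p'' ≫ i'' ≫ (𝟙 A - p ≫ i') = 𝟙 A - p ≫ i' := comp_comp_id_sub_comp hi'p h5
  have heg : (𝟙 A - p ≫ i') ≫ g = g ≫ (𝟙 A - p ≫ i') := by
    simp only [Preadditive.sub_comp, Preadditive.comp_sub, Category.assoc, hi',
      ← reassoc_of% hp, Category.id_comp, Category.comp_id]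
  have : Epi p'' := (IsSplitEpi.mk' ⟨i'', h4⟩).epi
  refine ⟨i'' ≫ (𝟙 A - p ≫ i'), ?_, ?_, ?_, ?_⟩
  · rw [← cancel_epi p'', reassoc_of% hp'', he, ← heg, ← Category.assoc, he]
  · simp [Preadditive.sub_comp, hi'p]
  · simp [Preadditive.sub_comp, h3, h4]
  · rw [he, add_sub_cancel]

end EquivariantComplement

theorem equivariant_splitting_criterion_general
    (K : Type*) [Field K] [CharZero K]
    (C : Type*) [Category C] [Preadditive C] [Linear K C]
    (o : ℕ) (ho : 1 ≤ o)
    (A A' A'' : C)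
    (g : A ⟶ A) (g' : A' ⟶ A') (g'' : A'' ⟶ A'')
    (hg : compPow g o = 𝟙 A) (hg' : compPow g' o = 𝟙 A')
    (i' : A' ⟶ A) (p'' : A ⟶ A'')
    (hi'eq : i' ≫ g = g' ≫ i') (hp''eq : p'' ≫ g'' = g ≫ p'')
    (p' : A ⟶ A') (i'' : A'' ⟶ A)
    (h1 : i' ≫ p' = 𝟙 A')
    (h3 : i' ≫ p'' = 0) (h4 : i'' ≫ p'' = 𝟙 A'')
    (h5 : p' ≫ i' + p'' ≫ i'' = 𝟙 A) :
    ∃ (ptilde : A ⟶ A') (itilde : A'' ⟶ A),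
      ptilde ≫ g' = g ≫ ptilde ∧ itilde ≫ g = g'' ≫ itilde ∧
      i' ≫ ptilde = 𝟙 A' ∧ itilde ≫ ptilde = 0 ∧
      i' ≫ p'' = 0 ∧ itilde ≫ p'' = 𝟙 A'' ∧
      ptilde ≫ i' + p'' ≫ itilde = 𝟙 A := by
  have hoK : (o : K) ≠ 0 := Nat.cast_ne_zero.mpr (by omega)
  set ptilde := cyclicAverage K g g' o p'
  have hequiv : ptilde ≫ g' = g ≫ ptilde := cyclicAverage_comp hg hg' p'
  have hret : i' ≫ ptilde = 𝟙 A' := by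
    rw [comp_cyclicAverage g' o hi'eq, h1, cyclicAverage_of_comp_eq hoK hg' (by simp)]
  obtain ⟨itilde, hiequiv, hip, hip'', hsum⟩ :=
    exists_equivariant_complement hi'eq hp''eq hequiv hret h3 h4 h5
  exact ⟨ptilde, itilde, hequiv, hiequiv, hret, hip, h3, hip'', hsum⟩

/-- Equivariant splitting criterion: in a `K`-linear preadditive category
(`K` a field of characteristic zero), given periodic automorphisms `g, g', g''`
of order dividing `o ≥ 1` on `A, A', A''`, equivariant morphisms
`i' : A' ⟶ A`, `p'' : A ⟶ A''`, and (not necessarily equivariant) morphisms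
`p', i''` realizing the five biproduct identities, there exist *equivariant*
`ptilde, itilde` realizing the same identities. -/
theorem equivariant_splitting_criterion
    (K : Type*) [Field K] [CharZero K]
    (C : Type*) [Category C] [Preadditive C] [Linear K C]
    (o : ℕ) (ho : 1 ≤ o)
    (A A' A'' : C)
    (g : A ⟶ A) (g' : A' ⟶ A') (g'' : A'' ⟶ A'')
    (hg : compPow g o = 𝟙 A) (hg' : compPow g' o = 𝟙 A') (hg'' : compPow g'' o = 𝟙 A'')
    (i' : A' ⟶ A) (p'' : A ⟶ A'')
    (hi'eq : i' ≫ g = g' ≫ i') (hp''eq : p'' ≫ g'' = g ≫ p'')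
    (p' : A ⟶ A') (i'' : A'' ⟶ A)
    (h1 : i' ≫ p' = 𝟙 A') (h2 : i'' ≫ p' = 0)
    (h3 : i' ≫ p'' = 0) (h4 : i'' ≫ p'' = 𝟙 A'')
    (h5 : p' ≫ i' + p'' ≫ i'' = 𝟙 A) :
    ∃ (ptilde : A ⟶ A') (itilde : A'' ⟶ A),
      ptilde ≫ g' = g ≫ ptilde ∧ itilde ≫ g = g'' ≫ itilde ∧
      i' ≫ ptilde = 𝟙 A' ∧ itilde ≫ ptilde = 0 ∧
      i' ≫ p'' = 0 ∧ itilde ≫ p'' = 𝟙 A'' ∧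
      ptilde ≫ i' + p'' ≫ itilde = 𝟙 A :=
  equivariant_splitting_criterion_general K C o ho A A' A'' g g' g'' hg hg' i' p'' hi'eq hp''eq p'
    i'' h1 h3 h4 h5
end

section
/- Let R be a commutative ring and S a subring of R. Let ι be a finite type, and let G : ι → ι → ℤ → R satisfy: G b b' n = 0 whenever n > 0; G b b' 0 = 1 if b = b' and G b b' 0 = 0 if b ≠ b'; and G b b' n ∈ S whenever n < 0. Let P : ι → ℤ → R be a family of coefficient functions such that each P b has finite support. If for every b' ∈ ι and every t ∈ ℤ the (finite) sum ∑_{b ∈ ι} ∑_{n ∈ ℤ} P b n · G b b' (t − n) lies in S, then P b n ∈ S for all b ∈ ι and n ∈ ℤ. -/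
/-!
Only the terms with `n ≥ t` contribute to the `t`-th convolution sum against `b'`, and the term
`n = t` contributes exactly `P b' t`. So if some coefficient is not in `S`, take the largest
degree `t` where this happens (it exists since all supports are finite): every other term of the
`t`-th sum lies in `S`, and hence so does `P b' t`, a contradiction.
-/

open Finset

section

variable {R : Type*} [CommRing R] {S : Subring R}

theorem finsum_mul_sub_sub_mul_zero_mem {f g : ℤ → R} (hf : (Function.support f).Finite)
    (hg_pos : ∀ n, 0 < n → g n = 0) (hg_neg : ∀ n, n < 0 → g n ∈ S) {t : ℤ}
    (hf_gt : ∀ n, t < n → f n ∈ S) :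
    ∑ᶠ n, f n * g (t - n) - f t * g 0 ∈ S := by
  classical
  set s := insert t hf.toFinset
  have hsupp : Function.support (fun n => f n * g (t - n)) ⊆ s := fun n hn =>
    mem_insert_of_mem (hf.mem_toFinset.2 (left_ne_zero_of_mul hn))
  rw [finsum_eq_sum_of_support_subset _ hsupp, ← add_sum_erase s _ (mem_insert_self t _),
    sub_self, add_sub_cancel_left]
  refine S.sum_mem fun n hn => ?_
  rcases lt_or_gt_of_ne (ne_of_mem_erase hn) with hlt | hgt
  · rw [hg_pos _ (by omega), mul_zero]
    exact S.zero_mem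
  · exact S.mul_mem (hf_gt n hgt) (hg_neg _ (by omega))

theorem mem_of_forall_gt_mem {ι : Type*} [Fintype ι] {G : ι → ι → ℤ → R}
    (hGpos : ∀ b b' n, 0 < n → G b b' n = 0) (hGdiag : ∀ b, G b b 0 = 1)
    (hGoff : ∀ b b', b ≠ b' → G b b' 0 = 0) (hGneg : ∀ b b' n, n < 0 → G b b' n ∈ S)
    {P : ι → ℤ → R} (hP : ∀ b, (Function.support (P b)).Finite) {b' : ι} {t : ℤ}
    (h : (∑ b : ι, ∑ᶠ n : ℤ, P b n * G b b' (t - n)) ∈ S)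
    (hgt : ∀ b n, t < n → P b n ∈ S) :
    P b' t ∈ S := by
  have hleading : ∑ b : ι, P b t * G b b' 0 = P b' t := by
    rw [sum_eq_single b' (fun b _ hb => by rw [hGoff b b' hb, mul_zero])
      (fun hb => absurd (mem_univ b') hb), hGdiag, mul_one]
  have hrest : ∑ b : ι, (∑ᶠ n : ℤ, P b n * G b b' (t - n) - P b t * G b b' 0) ∈ S :=
    S.sum_mem fun b _ =>
      finsum_mul_sub_sub_mul_zero_mem (hP b) (hGpos b b') (hGneg b b') (hgt b)
  rw [sum_sub_distrib, hleading] at hrest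
  simpa using S.sub_mem h hrest

end

/-- Abstract integrality lemma: if `(G b b' n)_{n ∈ ℤ}` records an almost
orthonormal pairing (`G b b' n = 0` for `n > 0`, `G b b' 0 = δ_{b b'}`, and
`G b b' n ∈ S` for `n < 0`), `P b` are finitely supported coefficient
functions, and all the convolution sums `∑_b ∑_n P b n · G b b' (t − n)` lie
in the subring `S`, then all coefficients `P b n` lie in `S`. -/
theorem coefficients_mem_subring_of_pairing
    (R : Type*) [CommRing R] (S : Subring R)
    (ι : Type*) [Fintype ι]
    (G : ι → ι → ℤ → R)
    (hGpos : ∀ b b' n, 0 < n → G b b' n = 0)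
    (hGdiag : ∀ b, G b b 0 = 1)
    (hGoff : ∀ b b', b ≠ b' → G b b' 0 = 0)
    (hGneg : ∀ b b' n, n < 0 → G b b' n ∈ S)
    (P : ι → ℤ → R)
    (hP : ∀ b, (Function.support (P b)).Finite)
    (h : ∀ (b' : ι) (t : ℤ), (∑ b : ι, ∑ᶠ n : ℤ, P b n * G b b' (t - n)) ∈ S) :
    ∀ b n, P b n ∈ S := by
  by_contra! hbad
  obtain ⟨b₀, t₀, hbad⟩ := hbad
  obtain ⟨M, hM⟩ := (Set.finite_iUnion hP).bddAbove
  have hbdd : ∃ M, ∀ t, (∃ b, P b t ∉ S) → t ≤ M := ⟨M, fun t ⟨b, hb⟩ =>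
    hM (Set.mem_iUnion.2 ⟨b, fun h0 => hb (h0 ▸ S.zero_mem)⟩)⟩
  obtain ⟨t, ⟨b, hb⟩, ht⟩ := Int.exists_greatest_of_bdd hbdd ⟨t₀, b₀, hbad⟩
  refine hb (mem_of_forall_gt_mem hGpos hGdiag hGoff hGneg hP (h b t) fun b' n hn => ?_)
  by_contra hn'
  exact (ht n ⟨b', hn'⟩).not_gt hn
end

section
/- Let I' be a finite set, let (s_{i'})_{i' ∈ I'} be positive integers, and let C = (c_{i'j'})_{i',j' ∈ I'} be a symmetrizable generalized Cartan matrix: c_{i'i'} = 2, c_{i'j'} ∈ ℤ_{≤0} for i' ≠ j', c_{i'j'} = 0 iff c_{j'i'} = 0, and s_{i'} c_{i'j'} = s_{j'} c_{j'i'} for all i', j'. Then there exist: a finite set I; a finite set H with maps s, t : H → I and a fixed-point-free involution h ↦ h̄ of H with s(h̄) = t(h) and t(h̄) = s(h); bijections a : I → I and a : H → H with s ∘ a = a ∘ s, t ∘ a = a ∘ t, and a(h̄) = a(h)‾ for all h ∈ H; and a surjection π : I → I' whose fibers are exactly the orbits of a on I; such that: (i) the fiber π^{-1}(i') has exactly s_{i'}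 elements for every i' ∈ I'; (ii) π(s(h)) ≠ π(t(h)) for every h ∈ H (so the automorphism is admissible and the quiver has no loops); (iii) for all i' ≠ j' in I', the number of h ∈ H with π(s(h)) = i' and π(t(h)) = j' equals −c_{i'j'} · s_{i'}; and (iv) there is a subset Ω ⊆ H with a(Ω) = Ω such that H is the disjoint union of Ω and Ω̄ := { h̄ : h ∈ Ω }. -/
namespace QuiverAuxCM

lemma castHom_castHom' {n m k : ℕ} (h1 : m ∣ n) (h2 : k ∣ m) (x : ZMod n) :
    ZMod.castHom h2 (ZMod k) (ZMod.castHom h1 (ZMod m) x)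
      = ZMod.castHom (h2.trans h1) (ZMod k) x := by
  rw [← ZMod.castHom_comp h2 h1]; rfl

lemma castHom_castHom {n m : ℕ} (h1 : m ∣ n) (h2 : n ∣ m) (x : ZMod n) :
    ZMod.castHom h2 (ZMod n) (ZMod.castHom h1 (ZMod m) x) = x := by
  have h : m = n := Nat.dvd_antisymm h1 h2
  subst h
  rw [castHom_castHom']
  simp [ZMod.castHom_apply, ZMod.cast_id]

variable {I' : Type} (s : I' → ℕ) (c : I' → I' → ℤ)

def Qt : Type := {q : I' × I' // q.1 ≠ q.2 ∧ c q.1 q.2 ≠ 0}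

def dN (i j : I') : ℕ := (-c i j * (s i : ℤ)).toNat

def AI : Type := Σ i' : I', ZMod (s i')

def AH : Type := Σ q : Qt c, ZMod (dN s c q.1.1 q.1.2)

variable (hd1 : ∀ q : Qt c, s q.1.1 ∣ dN s c q.1.1 q.1.2)
variable (hd2 : ∀ q : Qt c, s q.1.2 ∣ dN s c q.1.1 q.1.2)
variable (hdb : ∀ q : Qt c, dN s c q.1.2 q.1.1 ∣ dN s c q.1.1 q.1.2)
variable (hz : ∀ i j : I', c i j ≠ 0 → c j i ≠ 0)

def src : AH s c → AI s := fun h => ⟨h.1.1.1, ZMod.castHom (hd1 h.1) (ZMod (s h.1.1.1)) h.2⟩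

def tgt : AH s c → AI s := fun h => ⟨h.1.1.2, ZMod.castHom (hd2 h.1) (ZMod (s h.1.1.2)) h.2⟩

def bar : AH s c → AH s c := fun h =>
  ⟨⟨(h.1.1.2, h.1.1.1), h.1.2.1.symm, hz _ _ h.1.2.2⟩,
    ZMod.castHom (hdb h.1) _ h.2⟩

def aIf : AI s → AI s := fun x => ⟨x.1, x.2 + 1⟩

def aHf : AH s c → AH s c := fun h => ⟨h.1, h.2 + 1⟩

lemma aIf_iter (n : ℕ) (x : AI s) : (aIf s)^[n] x = ⟨x.1, x.2 + n⟩ := by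
  induction n with
  | zero => simp; rfl
  | succ n ih =>
      rw [Function.iterate_succ_apply', ih]
      simp [aIf, add_assoc]; rfl

end QuiverAuxCM

open QuiverAuxCM in
/-- Every symmetrizable generalized Cartan matrix `C = (c i' j')` with
symmetrizer data `(s i')` is realized by a finite quiver `(I, H, Ω)` with an
admissible automorphism `a` whose vertex orbits are the fibers of a surjection
`π : I → I'`, the orbit of `i'` having `s i'` elements, with no arrows inside
an orbit, and with `−c i' j' · s i'` arrows from the orbit of `i'` to the
orbit of `j'`, together with an `a`-stable orientation `Ω` with
`H = Ω ⊔ Ω̄`. -/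
theorem exists_quiver_with_admissible_automorphism
    (I' : Type) [Fintype I'] [DecidableEq I']
    (s : I' → ℕ) (hs : ∀ i, 0 < s i)
    (c : I' → I' → ℤ)
    (hdiag : ∀ i, c i i = 2)
    (hoff : ∀ i j, i ≠ j → c i j ≤ 0)
    (hzero : ∀ i j, (c i j = 0 ↔ c j i = 0))
    (hsym : ∀ i j, (s i : ℤ) * c i j = (s j : ℤ) * c j i) :
    ∃ (I H : Type) (src tgt : H → I) (bar : H → H)
      (aI : I → I) (aH : H → H) (π : I → I'),
      Finite I ∧ Finite H ∧
      -- `bar` is a fixed-point-free involution reversing source and target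
      (∀ h, bar (bar h) = h) ∧ (∀ h, bar h ≠ h) ∧
      (∀ h, src (bar h) = tgt h) ∧ (∀ h, tgt (bar h) = src h) ∧
      -- `a` is an automorphism of the quiver
      Function.Bijective aI ∧ Function.Bijective aH ∧
      (∀ h, src (aH h) = aI (src h)) ∧ (∀ h, tgt (aH h) = aI (tgt h)) ∧
      (∀ h, bar (aH h) = aH (bar h)) ∧
      -- the fibers of `π` are exactly the orbits of `a` on `I`
      Function.Surjective π ∧
      (∀ x y : I, π x = π y ↔ ∃ n : ℕ, aI^[n] x = y) ∧
      -- (i) the orbit over `i'` has `s i'` elements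
      (∀ i' : I', Nat.card {x : I // π x = i'} = s i') ∧
      -- (ii) admissibility / no loops: no arrow within an orbit
      (∀ h, π (src h) ≠ π (tgt h)) ∧
      -- (iii) number of arrows between distinct orbits
      (∀ i' j' : I', i' ≠ j' →
        (Nat.card {h : H // π (src h) = i' ∧ π (tgt h) = j'} : ℤ)
          = -(c i' j') * (s i' : ℤ)) ∧
      -- (iv) an `a`-stable orientation with `H = Ω ⊔ Ω̄`
      (∃ Ω : Set H, (∀ h, h ∈ Ω ↔ aH h ∈ Ω) ∧ (∀ h, h ∈ Ω ↔ bar h ∉ Ω)) := by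
  classical
  have hz : ∀ i j : I', c i j ≠ 0 → c j i ≠ 0 := fun i j h h2 => h ((hzero i j).mpr h2)
  have hInt : ∀ i j : I', i ≠ j → ((dN s c i j : ℕ) : ℤ) = -c i j * (s i : ℤ) := by
    intro i j hij
    exact Int.toNat_of_nonneg (mul_nonneg (by linarith [hoff i j hij]) (Int.natCast_nonneg _))
  have hdEq : ∀ i j : I', i ≠ j → dN s c i j = dN s c j i := by
    intro i j hij
    unfold dN
    congr 1
    linear_combination -(hsym i j)
  have hd1 : ∀ q : Qt c, s q.1.1 ∣ dN s c q.1.1 q.1.2 := by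
    rintro ⟨⟨i, j⟩, hij, hc⟩
    have := hInt i j hij
    exact Int.ofNat_dvd.mp (by rw [this]; exact dvd_mul_left _ _)
  have hd2 : ∀ q : Qt c, s q.1.2 ∣ dN s c q.1.1 q.1.2 := by
    rintro ⟨⟨i, j⟩, hij, hc⟩
    have h1 : dN s c i j = dN s c j i := hdEq i j hij
    have h2 := hInt j i hij.symm
    show s j ∣ dN s c i j
    rw [h1]
    exact Int.ofNat_dvd.mp (by rw [h2]; exact dvd_mul_left _ _)
  have hdb : ∀ q : Qt c, dN s c q.1.2 q.1.1 ∣ dN s c q.1.1 q.1.2 := by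
    rintro ⟨⟨i, j⟩, hij, hc⟩
    exact dvd_of_eq (hdEq i j hij).symm
  haveI hFinZ : ∀ i' : I', Finite (ZMod (s i')) := fun i' => by
    haveI : NeZero (s i') := ⟨(hs i').ne'⟩
    infer_instance
  haveI hFinI : Finite (AI s) := by
    unfold AI; infer_instance
  haveI hNeZ : ∀ q : Qt c, NeZero (dN s c q.1.1 q.1.2) := by
    rintro ⟨⟨i, j⟩, hij, hc⟩
    have h0 : (0 : ℤ) < -c i j * (s i : ℤ) := by
      have := hoff i j hij
      have hcij : c i j < 0 := lt_of_le_of_ne this hc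
      have hsi : (0 : ℤ) < (s i : ℤ) := by exact_mod_cast hs i
      exact mul_pos (by linarith) hsi
    refine ⟨?_⟩
    show (-c i j * (s i : ℤ)).toNat ≠ 0
    omega
  haveI hFinQ : Finite (Qt c) := by
    unfold Qt; infer_instance
  haveI hFinZH : ∀ q : Qt c, Finite (ZMod (dN s c q.1.1 q.1.2)) := fun q => by
    haveI := hNeZ q
    infer_instance
  haveI hFinH : Finite (AH s c) := by
    unfold AH; infer_instance
  refine ⟨AI s, AH s c, src s c hd1, tgt s c hd2, bar s c hdb hz, aIf s, aHf s c,
    Sigma.fst, hFinI, hFinH, ?_, ?_, ?_, ?_, ?_, ?_, ?_, ?_, ?_, ?_, ?_, ?_, ?_, ?_, ?_⟩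
  · -- bar ∘ bar = id
    rintro ⟨⟨⟨i, j⟩, hij, hc⟩, x⟩
    exact congrArg (fun y => (⟨⟨(i, j), hij, hc⟩, y⟩ : AH s c)) (castHom_castHom _ _ x)
  · -- bar fixed-point-free
    rintro ⟨⟨⟨i, j⟩, hij, hc⟩, x⟩ he
    exact hij (congrArg (fun h : AH s c => h.1.1.2) he)
  · -- src (bar h) = tgt h
    rintro ⟨⟨⟨i, j⟩, hij, hc⟩, x⟩
    exact congrArg (fun y => (⟨j, y⟩ : AI s)) (castHom_castHom' _ _ x)
  · -- tgt (bar h) = src h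
    rintro ⟨⟨⟨i, j⟩, hij, hc⟩, x⟩
    exact congrArg (fun y => (⟨i, y⟩ : AI s)) (castHom_castHom' _ _ x)
  · -- aI bijective
    refine Function.bijective_iff_has_inverse.mpr ⟨fun x => ⟨x.1, x.2 - 1⟩, ?_, ?_⟩
    · rintro ⟨i, x⟩; simp [aIf]; exact congrArg (Sigma.mk i) (add_sub_cancel_right x 1)
    · rintro ⟨i, x⟩; simp [aIf]; rfl
  · -- aH bijective
    refine Function.bijective_iff_has_inverse.mpr ⟨fun h => ⟨h.1, h.2 - 1⟩, ?_, ?_⟩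
    · rintro ⟨q, x⟩; simp [aHf]; exact congrArg (Sigma.mk q) (add_sub_cancel_right x 1)
    · rintro ⟨q, x⟩; simp [aHf]; rfl
  · -- src equivariance
    rintro ⟨⟨⟨i, j⟩, hij, hc⟩, x⟩
    dsimp only [QuiverAuxCM.src, aHf, aIf]
    rw [map_add, map_one]
  · -- tgt equivariance
    rintro ⟨⟨⟨i, j⟩, hij, hc⟩, x⟩
    dsimp only [tgt, aHf, aIf]
    rw [map_add, map_one]
  · -- bar equivariance
    rintro ⟨⟨⟨i, j⟩, hij, hc⟩, x⟩
    dsimp only [bar, aHf]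
    rw [map_add, map_one]
  · -- π surjective
    exact fun i' => ⟨⟨i', 0⟩, rfl⟩
  · -- fibers of π are the orbits
    intro x y
    obtain ⟨i, z⟩ := x
    constructor
    · intro h
      obtain ⟨i2, w⟩ := y
      have h' : i = i2 := h
      subst h'
      haveI : NeZero (s i) := ⟨(hs i).ne'⟩
      refine ⟨(w - z).val, ?_⟩
      refine (aIf_iter s _ _).trans ?_
      show (⟨i, z + ((w - z).val : ZMod (s i))⟩ : AI s) = ⟨i, w⟩
      exact congrArg (Sigma.mk i) (by rw [ZMod.natCast_rightInverse (w - z)]; ring)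
    · rintro ⟨n, rfl⟩
      exact (congrArg Sigma.fst (aIf_iter s n ⟨i, z⟩)).symm
  · -- fiber cardinality
    intro i'
    haveI : NeZero (s i') := ⟨(hs i').ne'⟩
    have e : ZMod (s i') ≃ {x : AI s // x.1 = i'} :=
      { toFun := fun y => ⟨⟨i', y⟩, rfl⟩
        invFun := fun x => ZMod.castHom (dvd_of_eq (congrArg s x.2).symm) (ZMod (s i')) x.1.2
        left_inv := fun y => by simp [ZMod.castHom_apply, ZMod.cast_id]
        right_inv := by
          rintro ⟨⟨i, z⟩, rfl⟩
          exact congrArg (fun y => (⟨⟨i, y⟩, rfl⟩ : {x : AI s // x.1 = i})) (by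
            simp [ZMod.castHom_apply, ZMod.cast_id]) }
    rw [Nat.card_congr e.symm, Nat.card_zmod]
  · -- no loops
    rintro ⟨⟨⟨i, j⟩, hij, hc⟩, x⟩
    exact hij
  · -- arrow counts
    intro i' j' hne
    by_cases hc : c i' j' = 0
    · have hE : IsEmpty {h : AH s c //
          (src s c hd1 h).1 = i' ∧ (tgt s c hd2 h).1 = j'} := by
        refine ⟨?_⟩
        rintro ⟨⟨⟨⟨i, j⟩, hij, hcij⟩, x⟩, h1, h2⟩
        dsimp [src, tgt] at h1 h2
        subst h1; subst h2
        exact hcij hc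
      rw [Nat.card_of_isEmpty]
      simp [hc]
    · have e : ZMod (dN s c i' j') ≃ {h : AH s c //
          (src s c hd1 h).1 = i' ∧ (tgt s c hd2 h).1 = j'} :=
        { toFun := fun y => ⟨⟨⟨(i', j'), hne, hc⟩, y⟩, rfl, rfl⟩
          invFun := fun h => ZMod.castHom
            (dvd_of_eq (by rw [show h.1.1.1.1 = i' from h.2.1,
              show h.1.1.1.2 = j' from h.2.2])) (ZMod (dN s c i' j')) h.1.2
          left_inv := fun y => by simp [ZMod.castHom_apply, ZMod.cast_id]
          right_inv := by
            rintro ⟨⟨⟨⟨i, j⟩, hij, hcij⟩, y⟩, h1, h2⟩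
            have h1' : i = i' := h1
            have h2' : j = j' := h2
            subst h1'; subst h2'
            refine Subtype.ext ?_
            exact congrArg (fun z => (⟨⟨(i, j), hij, hcij⟩, z⟩ : AH s c)) (by
              simp [ZMod.castHom_apply, ZMod.cast_id]) }
      rw [Nat.card_congr e.symm, Nat.card_zmod]
      rw [hInt i' j' hne]
  · -- orientation
    set e := Fintype.equivFin I' with he
    refine ⟨{h : AH s c | e h.1.1.1 < e h.1.1.2}, fun h => Iff.rfl, ?_⟩
    rintro ⟨⟨⟨i, j⟩, hij, hc⟩, x⟩
    have hne : e i ≠ e j := fun hh => hij (e.injective hh)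
    show e i < e j ↔ ¬ e j < e i
    constructor
    · exact fun h1 h2 => lt_asymm h1 h2
    · intro h1
      exact (hne.lt_or_gt).resolve_right h1
end

section
/- Let λ ∈ ℤ[I'] be a dominant weight, i.e. ⟨i, λ⟩ ≥ 0 for every i ∈ I'. Then the module L(λ) is integrable: for every x ∈ L(λ) and every i ∈ I', there exists N ∈ ℕ such that for all n > N one has E_i^n · x = 0 and F_i^n · x = 0. -/
noncomputable section

namespace QG

/-- The base field `F = ℚ(v)`. -/
abbrev F : Type := RatFunc ℚ

/-- The variable `v`. -/
def v : F := RatFunc.X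

/-- Generators of the quantum group: `E i`, `F i` and `K ν`. -/
inductive Gen (I' : Type) : Type
  | E : I' → Gen I'
  | F : I' → Gen I'
  | K : (I' →₀ ℤ) → Gen I'

variable {I' : Type} [DecidableEq I']

/-- The pairing `⟨ν, i⟩ = ∑_j ν j · c j i`. -/
def pairL (c : I' → I' → ℤ) (ν : I' →₀ ℤ) (i : I') : ℤ :=
  ν.sum fun j a => a * c j i

/-- The pairing `⟨i, λ⟩ = ∑_j λ j · c i j`. -/
def pairR (c : I' → I' → ℤ) (i : I') (lam : I' →₀ ℤ) : ℤ :=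
  lam.sum fun j b => b * c i j

/-- The biadditive pairing `⟨ν, μ⟩ = ∑_{i,j} ν i · μ j · c i j`. -/
def pairing (c : I' → I' → ℤ) (ν μ : I' →₀ ℤ) : ℤ :=
  ν.sum fun i a => μ.sum fun j b => a * b * c i j

/-- The quantum integer `[n]_i = (v_i^n − v_i^{−n})/(v_i − v_i^{−1})` with `v_i = v^s`. -/
def qint (s : ℕ) (n : ℕ) : F :=
  (v ^ ((s * n : ℕ) : ℤ) - v ^ (-((s * n : ℕ) : ℤ))) /
    (v ^ (s : ℤ) - v ^ (-(s : ℤ)))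

/-- The quantum factorial `[n]_i^!`. -/
def qfact (s : ℕ) (n : ℕ) : F := ∏ k ∈ Finset.range n, qint s (k + 1)

/-- The free `F`-algebra on the generators. -/
abbrev FA (I' : Type) := FreeAlgebra F (Gen I')

/-- The canonical image of a generator in the free algebra. -/
def ι (g : Gen I') : FA I' := FreeAlgebra.ι F g

/-- The weight `s i · i`, so that `K̃_i = K (tilde s i)`. -/
def tilde (s : I' → ℕ) (i : I') : I' →₀ ℤ := Finsupp.single i (s i : ℤ)

/-- Divided power `E_i^{(n)} = E_i^n/[n]_i^!` in the free algebra. -/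
def dE (s : I' → ℕ) (i : I') (n : ℕ) : FA I' :=
  (qfact (s i) n)⁻¹ • (ι (Gen.E i)) ^ n

/-- Divided power `F_i^{(n)} = F_i^n/[n]_i^!` in the free algebra. -/
def dF (s : I' → ℕ) (i : I') (n : ℕ) : FA I' :=
  (qfact (s i) n)⁻¹ • (ι (Gen.F i)) ^ n

/-- The defining relations (a)–(f) of the quantum group. -/
inductive Rel (c : I' → I' → ℤ) (s : I' → ℕ) : FA I' → FA I' → Prop
  | K_zero : Rel c s (ι (Gen.K 0)) 1
  | K_mul (ν ν' : I' →₀ ℤ) :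
      Rel c s (ι (Gen.K ν) * ι (Gen.K ν')) (ι (Gen.K (ν + ν')))
  | K_E (ν : I' →₀ ℤ) (i : I') :
      Rel c s (ι (Gen.K ν) * ι (Gen.E i))
        ((v ^ pairL c ν i) • (ι (Gen.E i) * ι (Gen.K ν)))
  | K_F (ν : I' →₀ ℤ) (i : I') :
      Rel c s (ι (Gen.K ν) * ι (Gen.F i))
        ((v ^ (-pairL c ν i)) • (ι (Gen.F i) * ι (Gen.K ν)))
  | E_F (i j : I') :
      Rel c s (ι (Gen.E i) * ι (Gen.F j) - ι (Gen.F j) * ι (Gen.E i))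
        (if i = j then
          (v ^ (s i : ℤ) - v ^ (-(s i : ℤ)))⁻¹ •
            (ι (Gen.K (tilde s i)) - ι (Gen.K (-tilde s i)))
        else 0)
  | serre_E (i j : I') (hij : i ≠ j) :
      Rel c s (∑ p ∈ Finset.range ((1 - c i j).toNat + 1),
        ((-1 : F) ^ p) • (dE s i p * ι (Gen.E j) * dE s i ((1 - c i j).toNat - p))) 0
  | serre_F (i j : I') (hij : i ≠ j) :
      Rel c s (∑ p ∈ Finset.range ((1 - c i j).toNat + 1),
        ((-1 : F) ^ p) • (dF s i p * ι (Gen.F j) * dF s i ((1 - c i j).toNat - p))) 0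

/-- The quantum group `U` associated to `(c, s)`. -/
abbrev U (c : I' → I' → ℤ) (s : I' → ℕ) := RingQuot (Rel c s)

variable (c : I' → I' → ℤ) (s : I' → ℕ)

/-- The quotient map. -/
def mk : FA I' →ₐ[F] U c s := RingQuot.mkAlgHom F (Rel c s)

/-- The generator `E i` of `U`. -/
def UE (i : I') : U c s := mk c s (ι (Gen.E i))

/-- The generator `F i` of `U`. -/
def UF (i : I') : U c s := mk c s (ι (Gen.F i))

/-- The generator `K ν` of `U`. -/
def UK (ν : I' →₀ ℤ) : U c s := mk c s (ι (Gen.K ν))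

/-- The divided power `E_i^{(n)}` in `U`. -/
def UEdiv (i : I') (n : ℕ) : U c s := (qfact (s i) n)⁻¹ • (UE c s i) ^ n

/-- The divided power `F_i^{(n)}` in `U`. -/
def UFdiv (i : I') (n : ℕ) : U c s := (qfact (s i) n)⁻¹ • (UF c s i) ^ n


/-- The left ideal
`∑_i U E_i + ∑_ν U (K_ν − v^{⟨ν,λ⟩}) + ∑_i U F_i^{⟨i,λ⟩+1}` defining `L(λ)`. -/
def hwIdeal (lam : I' →₀ ℤ) : Submodule (U c s) (U c s) :=
  Submodule.span (U c s)
    ({x | ∃ i : I', x = UE c s i} ∪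
      {x | ∃ ν : I' →₀ ℤ, x = UK c s ν - algebraMap F (U c s) (v ^ pairing c ν lam)} ∪
      {x | ∃ i : I', x = UF c s i ^ ((pairR c i lam).toNat + 1)})

/-- The irreducible integrable highest weight module `L(λ)`. -/
abbrev L (lam : I' →₀ ℤ) := U c s ⧸ hwIdeal c s lam

/-! ### Auxiliary lemmas for the proof of integrability -/

section Aux

lemma v_ne_zero : (v : F) ≠ 0 := RatFunc.X_ne_zero

lemma v_zpow_ne_zero (n : ℤ) : (v : F) ^ n ≠ 0 := zpow_ne_zero n v_ne_zero

lemma v_pow_sub_ne_zero {a : ℕ} (ha : 0 < a) :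
    (v : F) ^ (a : ℤ) - v ^ (-(a : ℤ)) ≠ 0 := by
  intro h
  have h2 : (v : F) ^ (a : ℤ) = v ^ (-(a : ℤ)) := sub_eq_zero.mp h
  have h3 : (v : F) ^ ((a : ℤ) + a) = 1 := by
    rw [zpow_add₀ v_ne_zero]
    nth_rewrite 2 [h2]
    rw [← zpow_add₀ v_ne_zero]
    simp
  have h4 : (v : F) ^ (2 * a) = 1 := by
    have : ((a : ℤ) + a) = ((2 * a : ℕ) : ℤ) := by push_cast; ring
    rw [this, zpow_natCast] at h3
    exact h3
  have h5 : (algebraMap (Polynomial ℚ) F) (Polynomial.X ^ (2 * a)) =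
      (algebraMap (Polynomial ℚ) F) 1 := by
    rw [map_pow, map_one, RatFunc.algebraMap_X]
    exact h4
  have h6 := RatFunc.algebraMap_injective ℚ h5
  have h7 := congrArg Polynomial.natDegree h6
  rw [Polynomial.natDegree_X_pow, Polynomial.natDegree_one] at h7
  omega

lemma qint_ne_zero {si n : ℕ} (hs : 0 < si) (hn : 0 < n) : qint si n ≠ 0 := by
  unfold qint
  exact div_ne_zero (v_pow_sub_ne_zero (Nat.mul_pos hs hn)) (v_pow_sub_ne_zero hs)

lemma qfact_ne_zero {si : ℕ} (hs : 0 < si) (n : ℕ) : qfact si n ≠ 0 := by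
  unfold qfact
  exact Finset.prod_ne_zero_iff.mpr fun k _ => qint_ne_zero hs k.succ_pos

variable {c : I' → I' → ℤ} {s : I' → ℕ}

lemma UK_mul_UE (ν : I' →₀ ℤ) (i : I') :
    UK c s ν * UE c s i = (v ^ pairL c ν i) • (UE c s i * UK c s ν) := by
  have h := RingQuot.mkAlgHom_rel F (Rel.K_E (c := c) (s := s) ν i)
  rw [map_mul, map_smul, map_mul] at h
  exact h

lemma UE_mul_UK (ν : I' →₀ ℤ) (i : I') :
    UE c s i * UK c s ν = (v ^ (-pairL c ν i)) • (UK c s ν * UE c s i) := by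
  rw [UK_mul_UE, smul_smul, ← zpow_add₀ v_ne_zero]
  simp

lemma UK_mul_UF (ν : I' →₀ ℤ) (i : I') :
    UK c s ν * UF c s i = (v ^ (-pairL c ν i)) • (UF c s i * UK c s ν) := by
  have h := RingQuot.mkAlgHom_rel F (Rel.K_F (c := c) (s := s) ν i)
  rw [map_mul, map_smul, map_mul] at h
  exact h

lemma UF_mul_UK (ν : I' →₀ ℤ) (i : I') :
    UF c s i * UK c s ν = (v ^ pairL c ν i) • (UK c s ν * UF c s i) := by
  rw [UK_mul_UF, smul_smul, ← zpow_add₀ v_ne_zero]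
  simp

lemma UE_mul_UF_same (i : I') :
    UE c s i * UF c s i = UF c s i * UE c s i +
      (v ^ (s i : ℤ) - v ^ (-(s i : ℤ)))⁻¹ • UK c s (tilde s i) -
      (v ^ (s i : ℤ) - v ^ (-(s i : ℤ)))⁻¹ • UK c s (-tilde s i) := by
  have h := RingQuot.mkAlgHom_rel F (Rel.E_F (c := c) (s := s) i i)
  rw [if_pos rfl, map_sub, map_mul, map_mul, map_smul, map_sub, smul_sub,
    sub_eq_iff_eq_add] at h
  simp only [UE, UF, UK, mk]
  rw [h]
  abel

lemma UE_mul_UF_ne {i j : I'} (hij : i ≠ j) :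
    UE c s i * UF c s j = UF c s j * UE c s i := by
  have h := RingQuot.mkAlgHom_rel F (Rel.E_F (c := c) (s := s) i j)
  rw [if_neg hij, map_sub, map_mul, map_mul, map_zero] at h
  exact sub_eq_zero.mp h

/-- Abstract commutation of powers with a `K`-like element. -/
lemma exists_pow_mul_eq {A : Type*} [Ring A] [Algebra F A] {e k : A} {r : F}
    (hk : e * k = r • (k * e)) (n : ℕ) :
    ∃ γ : F, e ^ n * k = γ • (k * e ^ n) := by
  induction n with
  | zero => exact ⟨1, by simp⟩
  | succ n ih =>
    obtain ⟨γ, hγ⟩ := ih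
    refine ⟨r * γ, ?_⟩
    calc e ^ (n + 1) * k = e ^ n * (e * k) := by rw [pow_succ, mul_assoc]
      _ = r • (e ^ n * k * e) := by rw [hk, mul_smul_comm, mul_assoc]
      _ = r • ((γ • (k * e ^ n)) * e) := by rw [hγ]
      _ = (r * γ) • (k * e ^ (n + 1)) := by
          rw [smul_mul_assoc, smul_smul, mul_assoc, ← pow_succ]

/-- Abstract commutation of powers of `e` past `f`, producing `k`-terms. -/
lemma exists_pow_mul_comm {A : Type*} [Ring A] [Algebra F A]
    {e f k k' : A} {δ r r' : F}
    (hef : e * f = f * e + δ • k - δ • k')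
    (hk : e * k = r • (k * e)) (hk' : e * k' = r' • (k' * e)) (n : ℕ) :
    ∃ α β : F, e ^ (n + 1) * f =
      f * e ^ (n + 1) + α • (k * e ^ n) + β • (k' * e ^ n) := by
  induction n with
  | zero =>
    refine ⟨δ, -δ, ?_⟩
    simpa [sub_eq_add_neg] using hef
  | succ n ih =>
    obtain ⟨α, β, ih⟩ := ih
    refine ⟨δ + r * α, -δ + r' * β, ?_⟩
    have h1 : e ^ (n + 2) * f = e * (e ^ (n + 1) * f) := by
      rw [← mul_assoc, ← pow_succ']
    rw [h1, ih, mul_add, mul_add, mul_smul_comm, mul_smul_comm,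
      ← mul_assoc, ← mul_assoc, ← mul_assoc, hef, hk, hk']
    have h2 : (f * e + δ • k - δ • k') * e ^ (n + 1) =
        f * e ^ (n + 2) + δ • (k * e ^ (n + 1)) - δ • (k' * e ^ (n + 1)) := by
      rw [sub_mul, add_mul, smul_mul_assoc, smul_mul_assoc, mul_assoc, ← pow_succ']
    have h3 : (r • (k * e)) * e ^ n = r • (k * e ^ (n + 1)) := by
      rw [smul_mul_assoc, mul_assoc, ← pow_succ']
    have h4 : (r' • (k' * e)) * e ^ n = r' • (k' * e ^ (n + 1)) := by
      rw [smul_mul_assoc, mul_assoc, ← pow_succ']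
    rw [h2, h3, h4, smul_smul, smul_smul, add_smul, add_smul, neg_smul,
      mul_comm r α, mul_comm r' β]
    abel

/-- Straightening for a Serre-type relation: any `e^a * y * e^b` lies in the
span of such monomials with left exponent `< m`. -/
lemma pow_mul_mem_span {A : Type*} [Ring A] [Algebra F A] (e y : A) (m : ℕ)
    (d : ℕ → F)
    (hser : e ^ m * y = ∑ p ∈ Finset.range m, d p • (e ^ p * y * e ^ (m - p)))
    (ab : ℕ) :
    ∀ a b, a + b = ab →
      e ^ a * y * e ^ b ∈
        Submodule.span F {u | ∃ p q, p < m ∧ p + q = ab ∧ u = e ^ p * y * e ^ q} := by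
  intro a
  induction a using Nat.strong_induction_on with
  | _ a ih =>
    intro b hab
    by_cases h : a < m
    · exact Submodule.subset_span ⟨a, b, h, hab, rfl⟩
    · push_neg at h
      have ha : a = (a - m) + m := by omega
      have h1 : e ^ a * y * e ^ b =
          ∑ p ∈ Finset.range m, d p • (e ^ (a - m + p) * y * e ^ (m - p + b)) := by
        conv_lhs => rw [ha]
        rw [pow_add, mul_assoc (e ^ (a - m)) (e ^ m) y, hser,
          Finset.mul_sum, Finset.sum_mul]
        refine Finset.sum_congr rfl fun p hp => ?_
        rw [mul_smul_comm, smul_mul_assoc]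
        congr 1
        rw [pow_add, pow_add]
        noncomm_ring
      rw [h1]
      refine Submodule.sum_mem _ fun p hp => Submodule.smul_mem _ _ ?_
      have hpm : p < m := Finset.mem_range.mp hp
      exact ih (a - m + p) (by omega) (m - p + b) (by omega)

/-- The quantum Serre relation for the `E`'s, solved for the top term. -/
lemma serre_E_reduce {i j : I'} (hs : 0 < s i) (hij : i ≠ j) :
    ∃ d : ℕ → F, UE c s i ^ (1 - c i j).toNat * UE c s j =
      ∑ p ∈ Finset.range (1 - c i j).toNat,
        d p • (UE c s i ^ p * UE c s j * UE c s i ^ ((1 - c i j).toNat - p)) := by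
  set m := (1 - c i j).toNat with hm
  set a : ℕ → F := fun p =>
    (-1 : F) ^ p * ((qfact (s i) p)⁻¹ * (qfact (s i) (m - p))⁻¹) with haa
  have h := RingQuot.mkAlgHom_rel F (Rel.serre_E (c := c) (s := s) i j hij)
  rw [map_sum, map_zero] at h
  have key : ∀ p, (RingQuot.mkAlgHom F (Rel c s))
      (((-1 : F) ^ p) • (dE s i p * ι (Gen.E j) * dE s i (m - p))) =
      a p • (UE c s i ^ p * UE c s j * UE c s i ^ (m - p)) := by
    intro p
    simp only [dE, smul_mul_assoc, mul_smul_comm, map_smul, map_mul, map_pow,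
      smul_smul, haa, UE, mk]
    congr 1
    ring
  simp only [← hm, key] at h
  have ham : a m ≠ 0 := by
    refine mul_ne_zero (pow_ne_zero _ (neg_ne_zero.mpr one_ne_zero))
      (mul_ne_zero (inv_ne_zero (qfact_ne_zero hs m)) (inv_ne_zero ?_))
    simpa using qfact_ne_zero hs (m - m)
  rw [Finset.sum_range_succ, Nat.sub_self, pow_zero, mul_one] at h
  have hX : a m • (UE c s i ^ m * UE c s j) =
      -∑ p ∈ Finset.range m, a p • (UE c s i ^ p * UE c s j * UE c s i ^ (m - p)) :=
    eq_neg_of_add_eq_zero_right h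
  refine ⟨fun p => -((a m)⁻¹ * a p), ?_⟩
  calc UE c s i ^ m * UE c s j
      = (a m)⁻¹ • (a m • (UE c s i ^ m * UE c s j)) := (inv_smul_smul₀ ham _).symm
    _ = (a m)⁻¹ • (-∑ p ∈ Finset.range m,
          a p • (UE c s i ^ p * UE c s j * UE c s i ^ (m - p))) := by rw [hX]
    _ = _ := by
        rw [smul_neg, Finset.smul_sum, ← Finset.sum_neg_distrib]
        exact Finset.sum_congr rfl fun p _ => by
          rw [smul_smul]; exact (neg_smul _ _).symm

/-- The quantum Serre relation for the `F`'s, solved for the top term. -/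
lemma serre_F_reduce {i j : I'} (hs : 0 < s i) (hij : i ≠ j) :
    ∃ d : ℕ → F, UF c s i ^ (1 - c i j).toNat * UF c s j =
      ∑ p ∈ Finset.range (1 - c i j).toNat,
        d p • (UF c s i ^ p * UF c s j * UF c s i ^ ((1 - c i j).toNat - p)) := by
  set m := (1 - c i j).toNat with hm
  set a : ℕ → F := fun p =>
    (-1 : F) ^ p * ((qfact (s i) p)⁻¹ * (qfact (s i) (m - p))⁻¹) with haa
  have h := RingQuot.mkAlgHom_rel F (Rel.serre_F (c := c) (s := s) i j hij)
  rw [map_sum, map_zero] at h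
  have key : ∀ p, (RingQuot.mkAlgHom F (Rel c s))
      (((-1 : F) ^ p) • (dF s i p * ι (Gen.F j) * dF s i (m - p))) =
      a p • (UF c s i ^ p * UF c s j * UF c s i ^ (m - p)) := by
    intro p
    simp only [dF, smul_mul_assoc, mul_smul_comm, map_smul, map_mul, map_pow,
      smul_smul, haa, UF, mk]
    congr 1
    ring
  simp only [← hm, key] at h
  have ham : a m ≠ 0 := by
    refine mul_ne_zero (pow_ne_zero _ (neg_ne_zero.mpr one_ne_zero))
      (mul_ne_zero (inv_ne_zero (qfact_ne_zero hs m)) (inv_ne_zero ?_))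
    simpa using qfact_ne_zero hs (m - m)
  rw [Finset.sum_range_succ, Nat.sub_self, pow_zero, mul_one] at h
  have hX : a m • (UF c s i ^ m * UF c s j) =
      -∑ p ∈ Finset.range m, a p • (UF c s i ^ p * UF c s j * UF c s i ^ (m - p)) :=
    eq_neg_of_add_eq_zero_right h
  refine ⟨fun p => -((a m)⁻¹ * a p), ?_⟩
  calc UF c s i ^ m * UF c s j
      = (a m)⁻¹ • (a m • (UF c s i ^ m * UF c s j)) := (inv_smul_smul₀ ham _).symm
    _ = (a m)⁻¹ • (-∑ p ∈ Finset.range m,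
          a p • (UF c s i ^ p * UF c s j * UF c s i ^ (m - p))) := by rw [hX]
    _ = _ := by
        rw [smul_neg, Finset.smul_sum, ← Finset.sum_neg_distrib]
        exact Finset.sum_congr rfl fun p _ => by
          rw [smul_smul]; exact (neg_smul _ _).symm

/-- If every element of `T` kills `x`, then so does every element of the
`F`-span of `T`. -/
lemma span_act_zero {M : Type*} [AddCommGroup M] [Module (U c s) M]
    {T : Set (U c s)} {x : M} (h : ∀ t ∈ T, t • x = 0) {u : U c s}
    (hu : u ∈ Submodule.span F T) : u • x = 0 := by
  induction hu using Submodule.span_induction with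
  | mem t ht => exact h t ht
  | zero => exact zero_smul _ x
  | add a b _ _ ha hb => rw [add_smul, ha, hb, add_zero]
  | smul r a _ ha => rw [Algebra.smul_def, mul_smul, ha, smul_zero]

end Aux

/-- For a dominant weight `λ`, the module `L(λ)` is integrable: every `E_i`
and every `F_i` acts locally nilpotently. -/
theorem L_integrable
    {I' : Type} [Fintype I'] [DecidableEq I']
    (c : I' → I' → ℤ) (s : I' → ℕ)
    (hdiag : ∀ i, c i i = 2)
    (hoff : ∀ i j, i ≠ j → c i j ≤ 0)
    (hzero : ∀ i j, (c i j = 0 ↔ c j i = 0))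
    (hspos : ∀ i, 0 < s i)
    (hsym : ∀ i j, (s i : ℤ) * c i j = (s j : ℤ) * c j i)
    (lam : I' →₀ ℤ) (hdom : ∀ i, 0 ≤ pairR c i lam) :
    ∀ (x : L c s lam) (i : I'), ∃ N : ℕ, ∀ n > N,
      (UE c s i) ^ n • x = 0 ∧ (UF c s i) ^ n • x = 0 := by
  intro x i
  set P : L c s lam → Prop :=
    fun y => ∃ N : ℕ, ∀ n > N, UE c s i ^ n • y = 0 ∧ UF c s i ^ n • y = 0
    with hPdef
  show P x
  have hef : UE c s i * UF c s i = UF c s i * UE c s i +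
      (v ^ (s i : ℤ) - v ^ (-(s i : ℤ)))⁻¹ • UK c s (tilde s i) -
      (v ^ (s i : ℤ) - v ^ (-(s i : ℤ)))⁻¹ • UK c s (-tilde s i) :=
    UE_mul_UF_same i
  have hfe : UF c s i * UE c s i = UE c s i * UF c s i +
      (v ^ (s i : ℤ) - v ^ (-(s i : ℤ)))⁻¹ • UK c s (-tilde s i) -
      (v ^ (s i : ℤ) - v ^ (-(s i : ℤ)))⁻¹ • UK c s (tilde s i) := by
    rw [hef]; abel
  have hEKp : UE c s i * UK c s (tilde s i) =
      (v ^ (-pairL c (tilde s i) i)) • (UK c s (tilde s i) * UE c s i) :=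
    UE_mul_UK _ i
  have hEKm : UE c s i * UK c s (-tilde s i) =
      (v ^ (-pairL c (-tilde s i) i)) • (UK c s (-tilde s i) * UE c s i) :=
    UE_mul_UK _ i
  have hFKp : UF c s i * UK c s (tilde s i) =
      (v ^ pairL c (tilde s i) i) • (UK c s (tilde s i) * UF c s i) :=
    UF_mul_UK _ i
  have hFKm : UF c s i * UK c s (-tilde s i) =
      (v ^ pairL c (-tilde s i) i) • (UK c s (-tilde s i) * UF c s i) :=
    UF_mul_UK _ i
  -- closure properties of `P`
  have Padd : ∀ y z, P y → P z → P (y + z) := by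
    rintro y z ⟨N1, h1⟩ ⟨N2, h2⟩
    refine ⟨max N1 N2, fun n hn => ?_⟩
    have hn1 : n > N1 := lt_of_le_of_lt (le_max_left _ _) hn
    have hn2 : n > N2 := lt_of_le_of_lt (le_max_right _ _) hn
    constructor
    · rw [smul_add, (h1 n hn1).1, (h2 n hn2).1, add_zero]
    · rw [smul_add, (h1 n hn1).2, (h2 n hn2).2, add_zero]
  have Palg : ∀ (r : F) (y : L c s lam), P y → P (algebraMap F (U c s) r • y) := by
    rintro r y ⟨N, hN⟩
    refine ⟨N, fun n hn => ?_⟩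
    constructor
    · rw [← mul_smul, ← Algebra.commutes, mul_smul, (hN n hn).1, smul_zero]
    · rw [← mul_smul, ← Algebra.commutes, mul_smul, (hN n hn).2, smul_zero]
  have PK : ∀ (ν : I' →₀ ℤ) (y : L c s lam), P y → P (UK c s ν • y) := by
    rintro ν y ⟨N, hN⟩
    refine ⟨N, fun n hn => ?_⟩
    constructor
    · obtain ⟨γ, hγ⟩ := exists_pow_mul_eq (UE_mul_UK (c := c) (s := s) ν i) n
      rw [← mul_smul, hγ, Algebra.smul_def, mul_smul, mul_smul,
        (hN n hn).1, smul_zero, smul_zero]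
    · obtain ⟨γ, hγ⟩ := exists_pow_mul_eq (UF_mul_UK (c := c) (s := s) ν i) n
      rw [← mul_smul, hγ, Algebra.smul_def, mul_smul, mul_smul,
        (hN n hn).2, smul_zero, smul_zero]
  have PE : ∀ (j : I') (y : L c s lam), P y → P (UE c s j • y) := by
    rintro j y ⟨N, hN⟩
    by_cases hji : j = i
    · obtain rfl := hji.symm
      refine ⟨N + 1, fun n hn => ?_⟩
      constructor
      · rw [← mul_smul, ← pow_succ]
        exact (hN (n + 1) (by omega)).1
      · obtain ⟨n', rfl⟩ : ∃ n', n = n' + 1 := ⟨n - 1, by omega⟩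
        obtain ⟨α, β, hc⟩ := exists_pow_mul_comm hfe hFKm hFKp n'
        rw [← mul_smul, hc, add_smul, add_smul]
        have h1 : (UE c s i * UF c s i ^ (n' + 1)) • y = 0 := by
          rw [mul_smul, (hN (n' + 1) (by omega)).2, smul_zero]
        have h2 : (α • (UK c s (-tilde s i) * UF c s i ^ n')) • y = 0 := by
          rw [Algebra.smul_def, mul_smul, mul_smul, (hN n' (by omega)).2,
            smul_zero, smul_zero]
        have h3 : (β • (UK c s (tilde s i) * UF c s i ^ n')) • y = 0 := by
          rw [Algebra.smul_def, mul_smul, mul_smul, (hN n' (by omega)).2,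
            smul_zero, smul_zero]
        rw [h1, h2, h3, add_zero, add_zero]
    · have hij : i ≠ j := fun h => hji h.symm
      have hm : 0 < (1 - c i j).toNat := by
        have := hoff i j hij
        omega
      obtain ⟨d, hd⟩ := serre_E_reduce (c := c) (s := s) (hspos i) hij
      refine ⟨N + (1 - c i j).toNat, fun n hn => ?_⟩
      constructor
      · have hmem := pow_mul_mem_span (UE c s i) (UE c s j) ((1 - c i j).toNat)
          d hd n n 0 (Nat.add_zero n)
        have hz : (UE c s i ^ n * UE c s j * UE c s i ^ 0) • y = 0 := by
          refine span_act_zero (fun t ht => ?_) hmem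
          obtain ⟨p, q, hpm, hpq, rfl⟩ := ht
          rw [mul_smul, (hN q (by omega)).1, smul_zero]
        rw [pow_zero, mul_one] at hz
        rw [← mul_smul]
        exact hz
      · have hcU : Commute (UE c s j) (UF c s i) := UE_mul_UF_ne hji
        rw [← mul_smul, (hcU.symm.pow_left n).eq, mul_smul,
          (hN n (by omega)).2, smul_zero]
  have PF : ∀ (j : I') (y : L c s lam), P y → P (UF c s j • y) := by
    rintro j y ⟨N, hN⟩
    by_cases hji : j = i
    · obtain rfl := hji.symm
      refine ⟨N + 1, fun n hn => ?_⟩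
      constructor
      · obtain ⟨n', rfl⟩ : ∃ n', n = n' + 1 := ⟨n - 1, by omega⟩
        obtain ⟨α, β, hc⟩ := exists_pow_mul_comm hef hEKp hEKm n'
        rw [← mul_smul, hc, add_smul, add_smul]
        have h1 : (UF c s i * UE c s i ^ (n' + 1)) • y = 0 := by
          rw [mul_smul, (hN (n' + 1) (by omega)).1, smul_zero]
        have h2 : (α • (UK c s (tilde s i) * UE c s i ^ n')) • y = 0 := by
          rw [Algebra.smul_def, mul_smul, mul_smul, (hN n' (by omega)).1,
            smul_zero, smul_zero]
        have h3 : (β • (UK c s (-tilde s i) * UE c s i ^ n')) • y = 0 := by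
          rw [Algebra.smul_def, mul_smul, mul_smul, (hN n' (by omega)).1,
            smul_zero, smul_zero]
        rw [h1, h2, h3, add_zero, add_zero]
      · rw [← mul_smul, ← pow_succ]
        exact (hN (n + 1) (by omega)).2
    · have hij : i ≠ j := fun h => hji h.symm
      have hm : 0 < (1 - c i j).toNat := by
        have := hoff i j hij
        omega
      obtain ⟨d, hd⟩ := serre_F_reduce (c := c) (s := s) (hspos i) hij
      refine ⟨N + (1 - c i j).toNat, fun n hn => ?_⟩
      constructor
      · have hcU : Commute (UE c s i) (UF c s j) := UE_mul_UF_ne hij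
        rw [← mul_smul, (hcU.pow_left n).eq, mul_smul,
          (hN n (by omega)).1, smul_zero]
      · have hmem := pow_mul_mem_span (UF c s i) (UF c s j) ((1 - c i j).toNat)
          d hd n n 0 (Nat.add_zero n)
        have hz : (UF c s i ^ n * UF c s j * UF c s i ^ 0) • y = 0 := by
          refine span_act_zero (fun t ht => ?_) hmem
          obtain ⟨p, q, hpm, hpq, rfl⟩ := ht
          rw [mul_smul, (hN q (by omega)).2, smul_zero]
        rw [pow_zero, mul_one] at hz
        rw [← mul_smul]
        exact hz
  -- the highest weight vector
  have hbase : P (Submodule.Quotient.mk 1 : L c s lam) := by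
    refine ⟨(pairR c i lam).toNat + 1, fun n hn => ?_⟩
    constructor
    · obtain ⟨n', rfl⟩ : ∃ n', n = n' + 1 := ⟨n - 1, by omega⟩
      have hE0 : UE c s i • (Submodule.Quotient.mk 1 : L c s lam) = 0 := by
        rw [← Submodule.Quotient.mk_smul, smul_eq_mul, mul_one]
        exact (Submodule.Quotient.mk_eq_zero _).mpr
          (Submodule.subset_span (Or.inl (Or.inl ⟨i, rfl⟩)))
      rw [pow_succ, mul_smul, hE0, smul_zero]
    · obtain ⟨n', rfl⟩ : ∃ n', n = n' + ((pairR c i lam).toNat + 1) :=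
        ⟨n - ((pairR c i lam).toNat + 1), by omega⟩
      have hF0 : UF c s i ^ ((pairR c i lam).toNat + 1) •
          (Submodule.Quotient.mk 1 : L c s lam) = 0 := by
        rw [← Submodule.Quotient.mk_smul, smul_eq_mul, mul_one]
        exact (Submodule.Quotient.mk_eq_zero _).mpr
          (Submodule.subset_span (Or.inr ⟨i, rfl⟩))
      rw [pow_add, mul_smul, hF0, smul_zero]
  -- induction over the free algebra
  have main : ∀ w : FA I', ∀ y : L c s lam, P y → P (mk c s w • y) := by
    intro w
    induction w using FreeAlgebra.induction with
    | grade0 r =>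
      intro y hy
      rw [show (mk c s) (algebraMap F (FA I') r) = algebraMap F (U c s) r from
        (mk c s).commutes r]
      exact Palg r y hy
    | grade1 g =>
      cases g with
      | E j => exact PE j
      | F j => exact PF j
      | K ν => exact PK ν
    | mul a b ha hb =>
      intro y hy
      rw [map_mul, mul_smul]
      exact ha _ (hb _ hy)
    | add a b ha hb =>
      intro y hy
      rw [map_add, add_smul]
      exact Padd _ _ (ha _ hy) (hb _ hy)
  -- conclude
  obtain ⟨u, hu⟩ := Submodule.Quotient.mk_surjective (hwIdeal c s lam) x
  have hx : x = u • (Submodule.Quotient.mk 1 : L c s lam) := by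
    rw [← Submodule.Quotient.mk_smul, smul_eq_mul, mul_one, hu]
  obtain ⟨w, hw⟩ := RingQuot.mkAlgHom_surjective F (Rel c s) u
  rw [hx, ← hw]
  exact main w _ hbase

end QG
end
end
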